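/- arXiv:2303.01891 — 7 statements merged into one kernel-verified Lean document; each statement's English description precedes it below -/
import Mathlib

section
/- Let Z be a finite-dimensional normed vector space and C ⊆ Z a compact convex subset such that the convex cone ℝ₊·C generated by C has non-empty interior. Then the semigroup S(C) of linear operators leaving C invariant is compact (bounded and closed in operator norm). -/
/-- If `C` is a compact convex subset of a finite-dimensional normed space whose generated
convex cone `ℝ₊·C` has non-empty interior, then the semigroup `S(C)` of linear operators
leaving `C` invariant is compact. -/
theorem stmt_1 {Z : Type*} [NormedAddCommGroup Z] [NormedSpace ℝ Z] [FiniteDimensional ℝ Z]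
    (C : Set Z) (hCcomp : IsCompact C) (hCconv : Convex ℝ C)
    (hint : (interior {z : Z | ∃ t : ℝ, 0 ≤ t ∧ ∃ x ∈ C, z = t • x}).Nonempty) :
    IsCompact {A : Z →L[ℝ] Z | ∀ x ∈ C, A x ∈ C} := by
  set S : Set (Z →L[ℝ] Z) := {A : Z →L[ℝ] Z | ∀ x ∈ C, A x ∈ C} with hS
  -- C is bounded
  obtain ⟨M, hM⟩ : ∃ M, ∀ y ∈ C, ‖y‖ ≤ M := by
    obtain ⟨r, hr⟩ := hCcomp.isBounded.subset_closedBall 0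
    exact ⟨r, fun y hy => by simpa using hr hy⟩
  set cone : Set Z := {z : Z | ∃ t : ℝ, 0 ≤ t ∧ ∃ x ∈ C, z = t • x} with hcone
  -- the cone spans Z
  have hspan : Submodule.span ℝ cone = ⊤ := by
    apply Submodule.eq_top_of_nonempty_interior'
    obtain ⟨z, hz⟩ := hint
    exact ⟨z, interior_mono (Submodule.subset_span) hz⟩
  -- pointwise boundedness of S
  have hpt : ∀ u : Z, ∃ c : ℝ, ∀ A : S, ‖(A : Z →L[ℝ] Z) u‖ ≤ c := by
    intro u
    have hu : u ∈ Submodule.span ℝ cone := hspan ▸ Submodule.mem_top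
    induction hu using Submodule.span_induction with
    | mem z hz =>
        obtain ⟨t, ht, x, hx, rfl⟩ := hz
        refine ⟨t * M, fun A => ?_⟩
        have : (A : Z →L[ℝ] Z) x ∈ C := A.2 x hx
        calc ‖(A : Z →L[ℝ] Z) (t • x)‖ = t * ‖(A : Z →L[ℝ] Z) x‖ := by
              rw [map_smul, norm_smul, Real.norm_of_nonneg ht]
          _ ≤ t * M := by
              exact mul_le_mul_of_nonneg_left (hM _ this) ht
    | zero => exact ⟨0, fun A => by simp⟩
    | add x y hx hy ihx ihy =>
        obtain ⟨c₁, h₁⟩ := ihx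
        obtain ⟨c₂, h₂⟩ := ihy
        refine ⟨c₁ + c₂, fun A => ?_⟩
        calc ‖(A : Z →L[ℝ] Z) (x + y)‖ ≤ ‖(A : Z →L[ℝ] Z) x‖ + ‖(A : Z →L[ℝ] Z) y‖ := by
              rw [map_add]; exact norm_add_le _ _
          _ ≤ c₁ + c₂ := add_le_add (h₁ A) (h₂ A)
    | smul a x hx ih =>
        obtain ⟨c, h⟩ := ih
        refine ⟨|a| * c, fun A => ?_⟩
        rw [map_smul, norm_smul, Real.norm_eq_abs]
        have hc : 0 ≤ c := le_trans (norm_nonneg _) (h A)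
        exact mul_le_mul_of_nonneg_left (h A) (abs_nonneg a)
  -- uniform bound by Banach–Steinhaus
  obtain ⟨C', hC'⟩ := banach_steinhaus (g := fun A : S => (A : Z →L[ℝ] Z)) (fun u => hpt u)
  have hbdd : Bornology.IsBounded S := by
    rw [Metric.isBounded_iff_subset_closedBall 0]
    exact ⟨C', fun A hA => by
      simpa [Metric.mem_closedBall, dist_eq_norm] using hC' ⟨A, hA⟩⟩
  have hclosed : IsClosed S := by
    have : S = ⋂ x ∈ C, (fun A : Z →L[ℝ] Z => A x) ⁻¹' C := by
      ext A; simp [hS, Set.mem_iInter]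
    rw [this]
    exact isClosed_biInter fun x _ =>
      hCcomp.isClosed.preimage (ContinuousLinearMap.apply ℝ Z x).continuous
  exact Metric.isCompact_of_isClosed_isBounded hclosed hbdd
end

section
/- Let S be a closed convex subsemigroup of B(Z) containing the identity. Then S − id ⊆ L(S), i.e., for every A ∈ S the operator A − id lies in the Lie wedge of S. -/
/-!
Writing `exp (t • (A - 1)) = e⁻ᵗ • exp (t • A) = ∑ₙ e⁻ᵗ tⁿ / n! • Aⁿ` exhibits it as an infinite
convex combination, with Poisson weights, of the powers `Aⁿ ∈ S`. Its finite truncations,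
renormalised, lie in `S` by convexity and converge to it, so it lies in the closed set `S`.
-/

open NormedSpace

open Filter Topology in
theorem Convex.hasSum_mem_of_isClosed {ι E : Type*} [AddCommGroup E] [Module ℝ E]
    [TopologicalSpace E] [ContinuousSMul ℝ E] {s : Set E} (hs : Convex ℝ s) (hsc : IsClosed s)
    {w : ι → ℝ} {z : ι → E} {y : E} (hw₀ : ∀ i, 0 ≤ w i) (hw₁ : HasSum w 1)
    (hz : ∀ i, z i ∈ s) (hy : HasSum (fun i => w i • z i) y) : y ∈ s := by
  have hcenter : Tendsto (fun t : Finset ι => t.centerMass w z) atTop (𝓝 y) := by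
    have h := (hw₁.inv₀ one_ne_zero).smul hy
    rw [inv_one, one_smul] at h
    exact h
  refine hsc.mem_of_tendsto hcenter ?_
  filter_upwards [hw₁.eventually (lt_mem_nhds one_pos)] with t ht
  exact hs.centerMass_mem (fun i _ => hw₀ i) ht (fun i _ => hz i)

section

variable {𝔸 : Type*} [NormedRing 𝔸] [NormedAlgebra ℝ 𝔸] [CompleteSpace 𝔸]

theorem NormedSpace.exp_smul_sub_one (a : 𝔸) (t : ℝ) :
    exp (t • (a - 1)) = Real.exp (-t) • exp (t • a) := by
  have hball (x : 𝔸) : x ∈ Metric.eball 0 (expSeries ℝ 𝔸).radius :=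
    (expSeries_radius_eq_top ℝ 𝔸).symm ▸ edist_lt_top _ _
  rw [smul_sub, sub_eq_neg_add, ← neg_smul,
    exp_add_of_commute_of_mem_ball (𝕂 := ℝ) ((Commute.one_left _).smul_left _) (hball _) (hball _),
    ← Algebra.algebraMap_eq_smul_one, ← algebraMap_exp_comm, ← Algebra.smul_def, Real.exp_eq_exp_ℝ]

theorem NormedSpace.hasSum_exp_smul_sub_one (a : 𝔸) (t : ℝ) :
    HasSum (fun n : ℕ => (Real.exp (-t) * t ^ n / n.factorial) • a ^ n) (exp (t • (a - 1))) := by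
  rw [exp_smul_sub_one]
  convert (exp_series_hasSum_exp' (𝕂 := ℝ) (t • a)).const_smul (Real.exp (-t)) using 2 with n
  rw [smul_pow, smul_smul, smul_smul]
  congr 1
  ring

end

/-- If `S` is a closed convex subsemigroup of the bounded operators containing the identity,
then `S - id ⊆ L(S)`: for every `A ∈ S`, the operator `A - id` lies in the Lie wedge of `S`. -/
theorem stmt_4 {Z : Type*} [NormedAddCommGroup Z] [NormedSpace ℝ Z] [FiniteDimensional ℝ Z]
    (S : Set (Z →L[ℝ] Z)) (hSclosed : IsClosed S) (hSconv : Convex ℝ S)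
    (hid : ContinuousLinearMap.id ℝ Z ∈ S)
    (hmul : ∀ A ∈ S, ∀ B ∈ S, A.comp B ∈ S) :
    ∀ A ∈ S, ∀ t : ℝ, 0 ≤ t → exp (t • (A - ContinuousLinearMap.id ℝ Z)) ∈ S := by
  intro A hA t ht
  lift t to NNReal using ht
  let M : Submonoid (Z →L[ℝ] Z) := ⟨⟨S, fun ha hb => hmul _ ha _ hb⟩, hid⟩
  exact hSconv.hasSum_mem_of_isClosed hSclosed (fun n => by positivity)
    (ProbabilityTheory.hasSum_one_poissonMeasure t) (fun n => pow_mem (show A ∈ M from hA) n)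
    (hasSum_exp_smul_sub_one A t)
end

section
/- Let S be a closed subsemigroup of B(Z) with Lie wedge L(S), and let γ : [0,ε] → S be a C¹ curve with γ(0) = id. Then γ'(0) ∈ L(S). (Characterization: A ∈ L(S) iff A = γ'(0) for some such curve.) -/
/-!
Since `S` is a closed semigroup, it suffices to show `γ (t / n) ^ n → exp (t • A)`.
Differentiability gives `n • (γ (t / n) - 1) → t • A`, and in any complete normed algebra
`n • (x n - 1) → a` forces `x n ^ n → exp a`: compare `x n` with `y n = exp (a / n)`, which
satisfies the same asymptotics and `y n ^ n = exp a`; both have norm `≤ 1 + C / n`, so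
`‖x n ^ n - y n ^ n‖ ≤ n (1 + C / n) ^ (n - 1) ‖x n - y n‖ ≤ exp C ‖n • (x n - y n)‖ → 0`.
-/

open NormedSpace Filter Topology Set

section NormedRing

variable {𝔸 : Type*} [NormedRing 𝔸]

theorem norm_pow_sub_pow_le {x y : 𝔸} {M : ℝ} (hx : ‖x‖ ≤ M) (hy : ‖y‖ ≤ M) (n : ℕ) :
    ‖x ^ n - y ^ n‖ ≤ n * M ^ (n - 1) * ‖x - y‖ := by
  have hM : 0 ≤ M := (norm_nonneg x).trans hx
  rcases n with _ | n
  · simp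
  induction n with
  | zero => simp
  | succ n ih =>
    have hxn : ‖x ^ (n + 1)‖ ≤ M ^ (n + 1) := (norm_pow_le' x n.succ_pos).trans (by gcongr)
    calc ‖x ^ (n + 2) - y ^ (n + 2)‖
        = ‖x ^ (n + 1) * (x - y) + (x ^ (n + 1) - y ^ (n + 1)) * y‖ := by
          congr 1; rw [pow_succ, pow_succ]; noncomm_ring
      _ ≤ ‖x ^ (n + 1)‖ * ‖x - y‖ + ‖x ^ (n + 1) - y ^ (n + 1)‖ * ‖y‖ :=
          (norm_add_le _ _).trans (add_le_add (norm_mul_le _ _) (norm_mul_le _ _))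
      _ ≤ M ^ (n + 1) * ‖x - y‖ + ((n + 1 : ℕ) * M ^ n * ‖x - y‖) * M := by
          gcongr; exact ih
      _ = (n + 2 : ℕ) * M ^ (n + 1) * ‖x - y‖ := by push_cast; ring

end NormedRing

section NormedAlgebra

variable {𝔸 : Type*} [NormedRing 𝔸] [NormedAlgebra ℝ 𝔸]

theorem tendsto_smul_exp_inv_smul_sub_one [CompleteSpace 𝔸] (a : 𝔸) :
    Tendsto (fun n : ℕ => (n : ℝ) • (exp ((n : ℝ)⁻¹ • a) - 1)) atTop (𝓝 a) := by
  have h := (hasDerivAt_exp_smul_const (𝕂 := ℝ) a 0).tendsto_slope_zero_right.comp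
    (tendsto_inv_atTop_nhdsGT_zero.comp tendsto_natCast_atTop_atTop)
  simpa [Function.comp_def] using h

variable [NormOneClass 𝔸]

theorem eventually_norm_le_one_add_div_of_tendsto_smul_sub_one {x : ℕ → 𝔸} {a : 𝔸}
    (hx : Tendsto (fun n : ℕ => (n : ℝ) • (x n - 1)) atTop (𝓝 a)) :
    ∀ᶠ n : ℕ in atTop, ‖x n‖ ≤ 1 + (‖a‖ + 1) / n := by
  filter_upwards [hx.norm.eventually_lt_const (lt_add_one ‖a‖), eventually_gt_atTop 0]
    with n hbound hn
  have hn' : (0 : ℝ) < n := by exact_mod_cast hn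
  rw [norm_smul, Real.norm_natCast] at hbound
  calc ‖x n‖ ≤ ‖(1 : 𝔸)‖ + ‖x n - 1‖ := norm_le_norm_add_norm_sub' _ _
    _ ≤ 1 + (‖a‖ + 1) / n := by
      rw [norm_one]
      gcongr
      rw [le_div_iff₀ hn', mul_comm]
      exact hbound.le

theorem tendsto_pow_sub_pow_of_tendsto_smul_sub_one {x y : ℕ → 𝔸} {a : 𝔸}
    (hx : Tendsto (fun n : ℕ => (n : ℝ) • (x n - 1)) atTop (𝓝 a))
    (hy : Tendsto (fun n : ℕ => (n : ℝ) • (y n - 1)) atTop (𝓝 a)) :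
    Tendsto (fun n => x n ^ n - y n ^ n) atTop (𝓝 0) := by
  set C := ‖a‖ + 1
  have hC : 0 ≤ C := by positivity
  have hxy : Tendsto (fun n : ℕ => (n : ℝ) • (x n - y n)) atTop (𝓝 0) := by
    simpa [← smul_sub] using hx.sub hy
  refine squeeze_zero_norm' ?_ (by simpa using hxy.norm.const_mul (Real.exp C))
  filter_upwards [eventually_norm_le_one_add_div_of_tendsto_smul_sub_one hx,
    eventually_norm_le_one_add_div_of_tendsto_smul_sub_one hy] with n hxn hyn
  have hpow : (1 + C / n) ^ (n - 1) ≤ Real.exp C :=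
    calc (1 + C / n) ^ (n - 1) ≤ (1 + C / n) ^ n :=
          pow_le_pow_right₀ (le_add_of_nonneg_right (by positivity)) (Nat.sub_le n 1)
      _ ≤ Real.exp C := by
          have h := Real.one_sub_div_pow_le_exp_neg (n := n) (t := -C)
            (by linarith [n.cast_nonneg (α := ℝ)])
          rwa [neg_div, sub_neg_eq_add, neg_neg] at h
  calc ‖x n ^ n - y n ^ n‖ ≤ n * (1 + C / n) ^ (n - 1) * ‖x n - y n‖ :=
        norm_pow_sub_pow_le hxn hyn n
    _ ≤ Real.exp C * ‖(n : ℝ) • (x n - y n)‖ := by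
        rw [norm_smul, Real.norm_natCast, mul_comm (n : ℝ), mul_assoc]
        gcongr

theorem tendsto_pow_exp_of_tendsto_smul_sub_one [CompleteSpace 𝔸] {x : ℕ → 𝔸} {a : 𝔸}
    (hx : Tendsto (fun n : ℕ => (n : ℝ) • (x n - 1)) atTop (𝓝 a)) :
    Tendsto (fun n => x n ^ n) atTop (𝓝 (exp a)) := by
  have h := tendsto_pow_sub_pow_of_tendsto_smul_sub_one hx (tendsto_smul_exp_inv_smul_sub_one a)
  rw [← tendsto_sub_const_iff (exp a), sub_self]
  refine h.congr' ?_
  let : NormedAlgebra ℚ 𝔸 := NormedAlgebra.restrictScalars ℚ ℝ 𝔸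
  filter_upwards [eventually_ne_atTop 0] with n hn
  rw [← exp_nsmul, ← Nat.cast_smul_eq_nsmul ℝ, smul_smul, mul_inv_cancel₀ (by exact_mod_cast hn),
    one_smul]

end NormedAlgebra

theorem HasDerivWithinAt.tendsto_smul_sub_div_natCast {E : Type*} [NormedAddCommGroup E]
    [NormedSpace ℝ E] {f : ℝ → E} {f' : E} (hf : HasDerivWithinAt f f' (Ioi 0) 0) {t : ℝ}
    (ht : 0 ≤ t) : Tendsto (fun n : ℕ => (n : ℝ) • (f (t / n) - f 0)) atTop (𝓝 (t • f')) := by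
  rcases ht.eq_or_lt with rfl | ht
  · simp
  have hslope := ((hasDerivWithinAt_iff_tendsto_slope' (lt_irrefl 0)).mp hf).const_smul t
  have htn : Tendsto (fun n : ℕ => t / n) atTop (𝓝[>] 0) :=
    tendsto_nhdsWithin_iff.mpr ⟨tendsto_const_div_atTop_nhds_zero_nat t,
      (eventually_gt_atTop 0).mono fun n hn => div_pos ht (by exact_mod_cast hn)⟩
  refine (hslope.comp htn).congr' ?_
  filter_upwards [eventually_ne_atTop 0] with n hn
  simp only [Function.comp_apply, slope, sub_zero, smul_smul]
  congr 1
  field_simp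

/-- If `γ : [0,ε] → S` is a `C¹` curve in a closed subsemigroup `S` (containing the identity)
with `γ(0) = id`, then `γ'(0)` belongs to the Lie wedge `L(S)`. -/
theorem stmt_5 {Z : Type*} [NormedAddCommGroup Z] [NormedSpace ℝ Z] [FiniteDimensional ℝ Z]
    (S : Set (Z →L[ℝ] Z)) (hSclosed : IsClosed S) (hid : ContinuousLinearMap.id ℝ Z ∈ S)
    (hmul : ∀ A ∈ S, ∀ B ∈ S, A.comp B ∈ S)
    (ε : ℝ) (hε : 0 < ε) (γ : ℝ → (Z →L[ℝ] Z)) (A : Z →L[ℝ] Z)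
    (hγS : ∀ t ∈ Set.Icc (0:ℝ) ε, γ t ∈ S)
    (hγ0 : γ 0 = ContinuousLinearMap.id ℝ Z)
    (hγC1 : HasDerivWithinAt γ A (Set.Icc (0:ℝ) ε) 0) :
    ∀ t : ℝ, 0 ≤ t → exp (t • A) ∈ S := by
  intro t ht
  -- `NormOneClass (Z →L[ℝ] Z)` needs `Nontrivial Z`
  rcases subsingleton_or_nontrivial Z with hZ | hZ
  · rwa [Subsingleton.elim (exp (t • A)) (ContinuousLinearMap.id ℝ Z)]
  let T : Submonoid (Z →L[ℝ] Z) := ⟨⟨S, fun ha hb => hmul _ ha _ hb⟩, hid⟩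
  have hderiv : HasDerivWithinAt γ A (Ioi 0) 0 := hγC1.mono_of_mem_nhdsWithin (Icc_mem_nhdsGT hε)
  have hslope : Tendsto (fun n : ℕ => (n : ℝ) • (γ (t / n) - 1)) atTop (𝓝 (t • A)) := by
    simpa only [hγ0, ← ContinuousLinearMap.one_def] using hderiv.tendsto_smul_sub_div_natCast ht
  have htn : Tendsto (fun n : ℕ => t / n) atTop (𝓝[≥] 0) :=
    tendsto_nhdsWithin_iff.mpr ⟨tendsto_const_div_atTop_nhds_zero_nat t,
      .of_forall fun n => div_nonneg ht n.cast_nonneg⟩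
  have hmem : ∀ᶠ n : ℕ in atTop, γ (t / n) ^ n ∈ T :=
    (htn.eventually (Icc_mem_nhdsGE hε)).mono fun n hn => pow_mem (hγS _ hn) n
  exact hSclosed.mem_of_tendsto (tendsto_pow_exp_of_tendsto_smul_sub_one hslope) hmem
end

section
/- Let S ⊆ B(Z) be a closed convex semigroup and γ : [0,ε] → S a C² curve with γ(0) = id and γ'(0) ∈ E(L(S)) (the edge, i.e., the largest linear subspace contained in L(S)). Then γ''(0) ∈ L(S). -/
/-!
Let `A = γ'(0)`. The curve `q x = exp (-x A) * γ x * cosh (x A)` stays in `S`, because `±A` lie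
in `L(S)` and `cosh (x A)` is the midpoint of `exp (x A)` and `exp (-x A)`. Its Taylor expansion
is `q x = 1 + (x² / 2) γ''(0) + o(x²) = exp ((x² / 2) γ''(0)) + o(x²)`. For `x_n = √(2t/n)`
the elements `q (x_n) ^ n ∈ S` are then within `n · o(1/n)` of
`exp ((t/n) γ''(0)) ^ n = exp (t γ''(0))`, which therefore lies in the closed set `S`.
-/

open NormedSpace Filter Topology Asymptotics

theorem norm_pow_succ_sub_pow_succ_le {R : Type*} [NormedRing R] {P Q : R} {M : ℝ}
    (hP : ‖P‖ ≤ M) (hQ : ‖Q‖ ≤ M) (n : ℕ) :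
    ‖P ^ (n + 1) - Q ^ (n + 1)‖ ≤ (n + 1) * M ^ n * ‖P - Q‖ := by
  induction n with
  | zero => simp
  | succ n ih =>
    have hM : 0 ≤ M := (norm_nonneg P).trans hP
    have hPn : ‖P ^ (n + 1)‖ ≤ M ^ (n + 1) :=
      (norm_pow_le' P n.succ_pos).trans (pow_le_pow_left₀ (norm_nonneg P) hP _)
    calc ‖P ^ (n + 2) - Q ^ (n + 2)‖
        = ‖P ^ (n + 1) * (P - Q) + (P ^ (n + 1) - Q ^ (n + 1)) * Q‖ := by
          congr 1; simp only [pow_succ P (n + 1), pow_succ Q (n + 1)]; noncomm_ring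
      _ ≤ ‖P ^ (n + 1)‖ * ‖P - Q‖ + ‖P ^ (n + 1) - Q ^ (n + 1)‖ * ‖Q‖ :=
          (norm_add_le _ _).trans (add_le_add (norm_mul_le _ _) (norm_mul_le _ _))
      _ ≤ M ^ (n + 1) * ‖P - Q‖ + ((n + 1) * M ^ n * ‖P - Q‖) * M := by gcongr
      _ = (↑(n + 1) + 1) * M ^ (n + 1) * ‖P - Q‖ := by push_cast; ring

theorem isLittleO_sub_taylor_two {E : Type*} [NormedAddCommGroup E] [NormedSpace ℝ E]
    {f f' : ℝ → E} {B : E} {s : Set ℝ} {a : ℝ} (hs : Convex ℝ s) (ha : a ∈ s)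
    (hf : ∀ x ∈ s, HasDerivWithinAt f (f' x) s x) (hf' : HasDerivWithinAt f' B s a) :
    (fun x => f x - f a - (x - a) • f' a - ((x - a) ^ 2 / 2) • B) =o[𝓝[s] a]
      fun x => (x - a) ^ 2 := by
  have hg : ∀ x ∈ s, HasDerivWithinAt (fun x => f x - (x - a) • f' a - ((x - a) ^ 2 / 2) • B)
      (f' x - f' a - (x - a) • B) s x := by
    intro x hx
    have h1 : HasDerivAt (fun y : ℝ => (y - a) • f' a) (f' a) x := by
      simpa using ((hasDerivAt_id x).sub_const a).smul_const (f' a)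
    have h2 : HasDerivAt (fun y : ℝ => ((y - a) ^ 2 / 2) • B) ((x - a) • B) x := by
      convert ((((hasDerivAt_id' x).sub_const a).fun_pow 2).div_const 2).smul_const B using 2
      simp
    exact ((hf x hx).sub h1.hasDerivWithinAt).sub h2.hasDerivWithinAt
  have := hs.isLittleO_pow_succ_real ha hg (n := 1)
    (by simpa using (hasDerivWithinAt_iff_isLittleO.1 hf'))
  simpa [sub_right_comm _ (f a)] using this

theorem tendsto_sqrt_div_nhdsGE_zero (c : ℝ) :
    Tendsto (fun n : ℕ => √(c / n)) atTop (𝓝[≥] 0) :=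
  tendsto_nhdsWithin_iff.2 ⟨(Real.continuous_sqrt.tendsto' 0 0 Real.sqrt_zero).comp
    (tendsto_const_div_atTop_nhds_zero_nat c), Eventually.of_forall fun _ => Real.sqrt_nonneg _⟩

section BanachAlgebra

variable {𝔸 : Type*} [NormedRing 𝔸] [NormedAlgebra ℝ 𝔸] [CompleteSpace 𝔸]

theorem NormedSpace.exp_div_smul_pow {n : ℕ} (hn : n ≠ 0) (t : ℝ) (x : 𝔸) :
    exp ((t / n) • x) ^ n = exp (t • x) := by
  let : NormedAlgebra ℚ 𝔸 := NormedAlgebra.restrictScalars ℚ ℝ 𝔸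
  rw [← exp_nsmul, ← Nat.cast_smul_eq_nsmul ℝ, smul_smul, mul_div_cancel₀ t (by exact_mod_cast hn)]

theorem isLittleO_exp_sq_smul_sub (B : 𝔸) :
    (fun x : ℝ => exp ((x ^ 2 / 2) • B) - 1 - (x ^ 2 / 2) • B) =o[𝓝 0] fun x => x ^ 2 := by
  have hk : Tendsto (fun x : ℝ => (x ^ 2 / 2) • B) (𝓝 0) (𝓝 0) :=
    ((continuous_pow 2).div_const 2 |>.smul continuous_const).tendsto' _ _ (by simp)
  have hO : (fun x : ℝ => (x ^ 2 / 2) • B) =O[𝓝 0] fun x => x ^ 2 :=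
    IsBigO.of_bound ‖B‖ (Eventually.of_forall fun x => by
      rw [norm_smul, norm_div, Real.norm_ofNat, mul_comm]
      gcongr; linarith [norm_nonneg (x ^ 2)])
  have h := (hasFDerivAt_exp_zero (𝕂 := ℝ) (𝔸 := 𝔸)).isLittleO.comp_tendsto hk
  simp only [Function.comp_def, sub_zero, exp_zero] at h
  exact h.trans_isBigO hO

/-- The factor `exp (x • -A)` cancels the first-order term of `γ`, and the midpoint factor
restores the second-order term `x² A²` that this cancellation costs. -/
noncomputable def edgeCorrectedCurve (γ : ℝ → 𝔸) (A : 𝔸) (x : ℝ) : 𝔸 :=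
  exp (x • -A) * γ x * ((2 : ℝ)⁻¹ • exp (x • A) + (2 : ℝ)⁻¹ • exp (x • -A))

theorem isLittleO_edgeCorrectedCurve_sub_exp {γ γ' : ℝ → 𝔸} {B : 𝔸} {s : Set ℝ}
    (hs : Convex ℝ s) (h0 : 0 ∈ s) (hγ0 : γ 0 = 1)
    (hγ : ∀ x ∈ s, HasDerivWithinAt γ (γ' x) s x) (hγ' : HasDerivWithinAt γ' B s 0) :
    (fun x => edgeCorrectedCurve γ (γ' 0) x - exp ((x ^ 2 / 2) • B)) =o[𝓝[s] 0]
      fun x => x ^ 2 := by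
  set A := γ' 0
  let u (x : ℝ) : 𝔸 := exp (x • -A)
  let u' (x : ℝ) : 𝔸 := u x * -A
  let v (x : ℝ) : 𝔸 := (2 : ℝ)⁻¹ • exp (x • A) + (2 : ℝ)⁻¹ • exp (x • -A)
  let v' (x : ℝ) : 𝔸 := (2 : ℝ)⁻¹ • (exp (x • A) * A) + (2 : ℝ)⁻¹ • (u x * -A)
  let p' (x : ℝ) : 𝔸 := u' x * γ x + u x * γ' x
  let q' (x : ℝ) : 𝔸 := p' x * v x + (u x * γ x) * v' x
  have hu (x : ℝ) : HasDerivAt u (u' x) x := hasDerivAt_exp_smul_const (-A) x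
  have hv (x : ℝ) : HasDerivAt v (v' x) x :=
    ((hasDerivAt_exp_smul_const A x).const_smul (2 : ℝ)⁻¹).add ((hu x).const_smul (2 : ℝ)⁻¹)
  have hu' : HasDerivAt u' (u' 0 * -A) 0 := (hu 0).mul_const (-A)
  have hv' : HasDerivAt v' ((2 : ℝ)⁻¹ • (exp ((0 : ℝ) • A) * A * A) + (2 : ℝ)⁻¹ • (u' 0 * -A)) 0 :=
    (((hasDerivAt_exp_smul_const A 0).mul_const A).const_smul (2 : ℝ)⁻¹).add
      (((hu 0).mul_const (-A)).const_smul (2 : ℝ)⁻¹)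
  have hp (x) (hx : x ∈ s) : HasDerivWithinAt (fun x => u x * γ x) (p' x) s x :=
    (hu x).hasDerivWithinAt.mul (hγ x hx)
  have hp' := (hu'.hasDerivWithinAt.mul (hγ 0 h0)).add ((hu 0).hasDerivWithinAt.mul hγ')
  have hq (x) (hx : x ∈ s) : HasDerivWithinAt (edgeCorrectedCurve γ A) (q' x) s x :=
    (hp x hx).mul (hv x).hasDerivWithinAt
  have hq' : HasDerivWithinAt q' B s 0 := by
    refine ((hp'.mul (hv 0).hasDerivWithinAt).add
      ((hp 0 h0).mul hv'.hasDerivWithinAt)).congr_deriv ?_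
    norm_num [u, u', v, v', p', hγ0, A, ← add_smul]
  have hq0 : edgeCorrectedCurve γ A 0 = 1 := by
    norm_num [edgeCorrectedCurve, hγ0, ← add_smul]
  have hq'0 : q' 0 = 0 := by simp [q', p', u', u, v, v', hγ0, A]
  have htaylor := isLittleO_sub_taylor_two hs h0 hq hq'
  simp only [hq0, hq'0, sub_zero, smul_zero] at htaylor
  refine (htaylor.sub ((isLittleO_exp_sq_smul_sub B).mono nhdsWithin_le_nhds)).congr_left ?_
  intro x; abel

variable [NormOneClass 𝔸]

theorem NormedSpace.norm_exp_le_exp_norm (x : 𝔸) : ‖exp x‖ ≤ Real.exp ‖x‖ := by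
  rw [Real.exp_eq_exp_ℝ]
  refine (exp_series_hasSum_exp' (𝕂 := ℝ) x).norm_le_of_bounded
    (exp_series_hasSum_exp' (𝕂 := ℝ) ‖x‖) fun n => ?_
  rw [norm_smul, Real.norm_of_nonneg (by positivity), smul_eq_mul]
  gcongr
  exact norm_pow_le x n

theorem norm_pow_sub_exp_le {P : 𝔸} {t : ℝ} {B : 𝔸} {n : ℕ} (hn : n ≠ 0)
    (hP : ‖P - exp ((t / n) • B)‖ ≤ (n : ℝ)⁻¹) :
    ‖P ^ n - exp (t • B)‖ ≤ Real.exp (|t| * ‖B‖ + 1) * (n * ‖P - exp ((t / n) • B)‖) := by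
  set Q := exp ((t / n) • B)
  set a := |t| * ‖B‖
  have hn' : (0 : ℝ) < n := by positivity
  have hQa : ‖Q‖ ≤ Real.exp (a / n) := by
    refine (norm_exp_le_exp_norm _).trans (Real.exp_le_exp.2 (le_of_eq ?_))
    rw [norm_smul, Real.norm_eq_abs, abs_div, Nat.abs_cast]; ring
  have hQ : ‖Q‖ ≤ Real.exp ((a + 1) / n) :=
    hQa.trans (Real.exp_le_exp.2 (by gcongr; linarith))
  have hP' : ‖P‖ ≤ Real.exp ((a + 1) / n) := calc
    ‖P‖ ≤ ‖Q‖ + ‖P - Q‖ := norm_le_insert' P Q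
    _ ≤ Real.exp (a / n) + (n : ℝ)⁻¹ := add_le_add hQa hP
    _ ≤ Real.exp (a / n) * Real.exp (n : ℝ)⁻¹ := by
      have h1 : 1 ≤ Real.exp (a / n) := Real.one_le_exp (by positivity)
      nlinarith [Real.add_one_le_exp (n : ℝ)⁻¹, inv_nonneg.2 hn'.le]
    _ = Real.exp ((a + 1) / n) := by rw [← Real.exp_add]; ring_nf
  obtain ⟨m, rfl⟩ := Nat.exists_eq_succ_of_ne_zero hn
  rw [← exp_div_smul_pow hn t B]
  calc ‖P ^ (m + 1) - Q ^ (m + 1)‖ ≤ (m + 1) * Real.exp ((a + 1) / ↑(m + 1)) ^ m * ‖P - Q‖ :=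
        norm_pow_succ_sub_pow_succ_le hP' hQ m
    _ ≤ (m + 1) * Real.exp ((a + 1) / ↑(m + 1)) ^ (m + 1) * ‖P - Q‖ := by
        gcongr
        · exact Real.one_le_exp (by positivity)
        · omega
    _ = Real.exp (a + 1) * (↑(m + 1) * ‖P - Q‖) := by
        rw [← Real.exp_nat_mul, mul_div_cancel₀ _ hn'.ne']; push_cast; ring

theorem tendsto_pow_of_isLittleO_sub_exp {P : ℕ → 𝔸} {t : ℝ} {B : 𝔸}
    (hP : (fun n : ℕ => P n - exp ((t / n) • B)) =o[atTop] fun n => (n : ℝ)⁻¹) :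
    Tendsto (fun n => P n ^ n) atTop (𝓝 (exp (t • B))) := by
  have hlim : Tendsto (fun n : ℕ => n * ‖P n - exp ((t / n) • B)‖) atTop (𝓝 0) := by
    refine hP.norm_left.tendsto_div_nhds_zero.congr fun n => ?_
    rw [div_inv_eq_mul, mul_comm]
  have hsmall : ∀ᶠ n : ℕ in atTop, ‖P n - exp ((t / n) • B)‖ ≤ (n : ℝ)⁻¹ := by
    filter_upwards [hP.bound one_pos] with n hn
    simpa [abs_of_nonneg] using hn
  rw [tendsto_iff_norm_sub_tendsto_zero]
  refine squeeze_zero' (Eventually.of_forall fun _ => norm_nonneg _) ?_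
    (by simpa using hlim.const_mul (Real.exp (|t| * ‖B‖ + 1)))
  filter_upwards [hsmall, eventually_ne_atTop 0] with n hn hn0
  exact norm_pow_sub_exp_le hn0 hn

theorem tendsto_pow_sqrt_of_isLittleO_sub_exp {q : ℝ → 𝔸} {B : 𝔸}
    (hq : (fun x => q x - exp ((x ^ 2 / 2) • B)) =o[𝓝[≥] 0] fun x => x ^ 2) {t : ℝ} (ht : 0 ≤ t) :
    Tendsto (fun n : ℕ => q √(2 * t / n) ^ n) atTop (𝓝 (exp (t • B))) := by
  have hsq (n : ℕ) : √(2 * t / n) ^ 2 = 2 * t * (n : ℝ)⁻¹ := by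
    rw [Real.sq_sqrt (by positivity), div_eq_mul_inv]
  refine tendsto_pow_of_isLittleO_sub_exp ?_
  have h := hq.comp_tendsto (tendsto_sqrt_div_nhdsGE_zero (2 * t))
  simp only [Function.comp_def, hsq] at h
  refine (h.trans_isBigO ((isBigO_refl _ _).const_mul_left (2 * t))).congr_left fun n => ?_
  congr 3
  ring

end BanachAlgebra

/-- If `S` is a closed convex subsemigroup of the bounded operators containing the identity
and `γ : [0,ε] → S` is a `C²` curve with `γ(0) = id` and `γ'(0)` in the edge of the
Lie wedge `L(S)` (i.e. both `γ'(0)` and `-γ'(0)` lie in `L(S)`), then `γ''(0) ∈ L(S)`. -/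
theorem stmt_6 {Z : Type*} [NormedAddCommGroup Z] [NormedSpace ℝ Z] [FiniteDimensional ℝ Z]
    (S : Set (Z →L[ℝ] Z)) (hSclosed : IsClosed S) (hSconv : Convex ℝ S)
    (hid : ContinuousLinearMap.id ℝ Z ∈ S)
    (hmul : ∀ A ∈ S, ∀ B ∈ S, A.comp B ∈ S)
    (ε : ℝ) (hε : 0 < ε) (γ γ' : ℝ → (Z →L[ℝ] Z)) (B₀ : Z →L[ℝ] Z)
    (hγS : ∀ t ∈ Set.Icc (0:ℝ) ε, γ t ∈ S)
    (hγ0 : γ 0 = ContinuousLinearMap.id ℝ Z)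
    (hγ' : ∀ t ∈ Set.Icc (0:ℝ) ε, HasDerivWithinAt γ (γ' t) (Set.Icc (0:ℝ) ε) t)
    (hγ'' : HasDerivWithinAt γ' B₀ (Set.Icc (0:ℝ) ε) 0)
    (hedge₁ : ∀ t : ℝ, 0 ≤ t → exp (t • γ' 0) ∈ S)
    (hedge₂ : ∀ t : ℝ, 0 ≤ t → exp (t • (-(γ' 0))) ∈ S) :
    ∀ t : ℝ, 0 ≤ t → exp (t • B₀) ∈ S := by
  intro t ht
  rcases subsingleton_or_nontrivial Z with hZ | hZ
  · rwa [Subsingleton.elim (exp (t • B₀)) (ContinuousLinearMap.id ℝ Z)]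
  let M : Submonoid (Z →L[ℝ] Z) := ⟨⟨S, fun ha hb => hmul _ ha _ hb⟩, hid⟩
  have hqS : ∀ x ∈ Set.Icc 0 ε, edgeCorrectedCurve γ (γ' 0) x ∈ M := fun x hx =>
    M.mul_mem (M.mul_mem (hedge₂ x hx.1) (hγS x hx))
      (hSconv (hedge₁ x hx.1) (hedge₂ x hx.1) (by norm_num) (by norm_num) (by norm_num))
  have hq := isLittleO_edgeCorrectedCurve_sub_exp (convex_Icc 0 ε) ⟨le_rfl, hε.le⟩ hγ0 hγ' hγ''
  have hlim := tendsto_pow_sqrt_of_isLittleO_sub_exp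
    (hq.mono (nhdsWithin_le_of_mem (Icc_mem_nhdsGE hε))) ht
  refine hSclosed.mem_of_tendsto hlim ?_
  filter_upwards [tendsto_sqrt_div_nhdsGE_zero (2 * t) (Icc_mem_nhdsGE hε)] with n hn
  exact M.pow_mem (hqS _ hn) n
end

section
/- Let d ∈ ℝⁿ with d > 0 (entrywise), and let x, y ∈ ℝⁿ. If there exists a d-stochastic matrix A (entrywise nonnegative, columns summing to 1, with Ad = d) such that Ay = x, then Σᵢxᵢ = Σᵢyᵢ and ‖dᵢ·x − yᵢ·d‖₁ ≤ ‖dᵢ·y − yᵢ·d‖₁ for all i = 1,…,n. -/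
open Finset

/-- If a `d`-stochastic matrix `A` (nonnegative, column sums `1`, `Ad = d`) maps `y` to `x`,
then the total sums agree and `‖dᵢ·x − yᵢ·d‖₁ ≤ ‖dᵢ·y − yᵢ·d‖₁` for every `i`. -/
theorem stmt_10 {n : ℕ} (d x y : Fin n → ℝ) (hd : ∀ i, 0 < d i)
    (A : Matrix (Fin n) (Fin n) ℝ)
    (hpos : ∀ i j, 0 ≤ A i j) (hcol : ∀ j, ∑ i, A i j = 1)
    (hfix : A.mulVec d = d) (hxy : A.mulVec y = x) :
    (∑ i, x i) = (∑ i, y i) ∧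
    ∀ i, (∑ j, |d i * x j - y i * d j|) ≤ (∑ j, |d i * y j - y i * d j|) := by
  have hx : ∀ j, x j = ∑ k, A j k * y k := by
    intro j; rw [← hxy]; rfl
  have hdv : ∀ j, d j = ∑ k, A j k * d k := by
    intro j
    conv_lhs => rw [← hfix]
    simp [Matrix.mulVec, dotProduct]
  constructor
  · simp only [hx]
    rw [Finset.sum_comm]
    refine Finset.sum_congr rfl fun k _ => ?_
    rw [← Finset.sum_mul, hcol, one_mul]
  · intro i
    have key : ∀ j, d i * x j - y i * d j = ∑ k, A j k * (d i * y k - y i * d k) := by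
      intro j
      rw [hx j]
      nth_rewrite 1 [hdv j]
      rw [Finset.mul_sum, Finset.mul_sum, ← Finset.sum_sub_distrib]
      refine Finset.sum_congr rfl fun k _ => by ring
    calc ∑ j, |d i * x j - y i * d j|
        ≤ ∑ j, ∑ k, A j k * |d i * y k - y i * d k| := by
          refine Finset.sum_le_sum fun j _ => ?_
          rw [key j]
          refine (Finset.abs_sum_le_sum_abs _ _).trans ?_
          refine le_of_eq (Finset.sum_congr rfl fun k _ => ?_)
          rw [abs_mul, abs_of_nonneg (hpos j k)]
      _ = ∑ k, |d i * y k - y i * d k| := by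
          rw [Finset.sum_comm]
          refine Finset.sum_congr rfl fun k _ => ?_
          rw [← Finset.sum_mul, hcol, one_mul]
end

section
/- With the qubit composition law above, the Markovianity condition factorizes: 1 − μ₃ − ε₃μ₃ = (1 − μ₁ − ε₁μ₁)(1 − μ₂ − ε₂μ₂). Consequently, if 1−μᵢ−εᵢμᵢ ≥ 0 and |cᵢ|² ≤ 1−μᵢ(1+εᵢ) for i=1,2, then |c₁c₂|² ≤ 1−μ₃(1+ε₃) where ε₃μ₃ is defined by the composition. -/
/-!
Writing `m = 1 - μ(1 + ε)`, the composition law is exactly the one under which `m` is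
multiplicative, `m₃ = m₁ m₂`; since `‖c‖²` is multiplicative too, the coherence bounds
`‖cᵢ‖² ≤ mᵢ` multiply to `‖c₁c₂‖² ≤ m₃`.
-/

theorem one_sub_composed_eq_mul {R : Type*} [CommRing R] (μ₁ ε₁ μ₂ ε₂ : R) :
    1 - (μ₁ + μ₂ - μ₁ * μ₂ * (1 + ε₁)) - (ε₁ * μ₁ + ε₂ * μ₂ - μ₁ * μ₂ * (1 + ε₁) * ε₂)
      = (1 - μ₁ - ε₁ * μ₁) * (1 - μ₂ - ε₂ * μ₂) := by
  ring

theorem norm_mul_sq_le_mul {α : Type*} [SeminormedRing α] [NormMulClass α] {a b : α}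
    {x y : ℝ} (ha : ‖a‖ ^ 2 ≤ x) (hb : ‖b‖ ^ 2 ≤ y) (hx : 0 ≤ x) :
    ‖a * b‖ ^ 2 ≤ x * y := by
  rw [norm_mul, mul_pow]
  exact mul_le_mul ha hb (by positivity) hx

/-- The Markovianity condition factorises under the qubit composition law:
`1 − μ₃ − ε₃μ₃ = (1 − μ₁ − ε₁μ₁)(1 − μ₂ − ε₂μ₂)`; consequently if
`1−μᵢ−εᵢμᵢ ≥ 0` and `|cᵢ|² ≤ 1−μᵢ(1+εᵢ)` for `i = 1,2`, then
`|c₁c₂|² ≤ 1 − μ₃(1+ε₃)`. -/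
theorem stmt_16 (μ₁ ε₁ μ₂ ε₂ : ℝ) (c₁ c₂ : ℂ) :
    (1 - (μ₁ + μ₂ - μ₁ * μ₂ * (1 + ε₁))
        - (ε₁ * μ₁ + ε₂ * μ₂ - μ₁ * μ₂ * (1 + ε₁) * ε₂)
      = (1 - μ₁ - ε₁ * μ₁) * (1 - μ₂ - ε₂ * μ₂)) ∧
    ((0 ≤ 1 - μ₁ - ε₁ * μ₁) → (0 ≤ 1 - μ₂ - ε₂ * μ₂) →
      ‖c₁‖ ^ 2 ≤ 1 - μ₁ * (1 + ε₁) → ‖c₂‖ ^ 2 ≤ 1 - μ₂ * (1 + ε₂) →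
      ‖c₁ * c₂‖ ^ 2 ≤
        1 - (μ₁ + μ₂ - μ₁ * μ₂ * (1 + ε₁))
          - (ε₁ * μ₁ + ε₂ * μ₂ - μ₁ * μ₂ * (1 + ε₁) * ε₂)) := by
  refine ⟨one_sub_composed_eq_mul μ₁ ε₁ μ₂ ε₂, fun h₁ _ hc₁ hc₂ => ?_⟩
  have expand (μ ε : ℝ) : 1 - μ * (1 + ε) = 1 - μ - ε * μ := by ring
  rw [expand] at hc₁ hc₂
  rw [one_sub_composed_eq_mul]
  exact norm_mul_sq_le_mul hc₁ hc₂ h₁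
end

section
/- With the qubit composition law: if μ₁,ε₁,μ₂,ε₂ ∈ [0,1] and |cᵢ|² ≤ (1−εᵢμᵢ)(1−μᵢ) for i=1,2, then |c₁c₂|² ≤ (1−ε₃μ₃)(1−μ₃), i.e., the thermal-operation constraint is preserved under composition. -/
/-! Multiplying the two constraints bounds `‖c₁ c₂‖²` by `(1 - ε₁μ₁)(1 - ε₂μ₂) · (1 - μ₁)(1 - μ₂)`.
The composition law is such that `1 - ε₃μ₃ = (1 - ε₁μ₁)(1 - ε₂μ₂) + μ₁μ₂ε₂` and
`1 - μ₃ = (1 - μ₁)(1 - μ₂) + μ₁μ₂ε₁`, and both corrections are nonnegative, so enlarging each of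
the two factors by its correction gives the constraint for the composite. -/

lemma one_sub_composed_epsMu (μ₁ ε₁ μ₂ ε₂ : ℝ) :
    1 - (ε₁ * μ₁ + ε₂ * μ₂ - μ₁ * μ₂ * (1 + ε₁) * ε₂) =
      (1 - ε₁ * μ₁) * (1 - ε₂ * μ₂) + μ₁ * μ₂ * ε₂ := by
  ring

lemma one_sub_composed_mu (μ₁ ε₁ μ₂ : ℝ) :
    1 - (μ₁ + μ₂ - μ₁ * μ₂ * (1 + ε₁)) = (1 - μ₁) * (1 - μ₂) + μ₁ * μ₂ * ε₁ := by
  ring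

lemma one_sub_mul_nonneg_of_mem_Icc {ε μ : ℝ} (hε : ε ∈ Set.Icc (0 : ℝ) 1)
    (hμ : μ ∈ Set.Icc (0 : ℝ) 1) : 0 ≤ 1 - ε * μ :=
  sub_nonneg.2 (mul_le_one₀ hε.2 hμ.1 hμ.2)

lemma mul_le_add_mul_add {α : Type*} [Semiring α] [PartialOrder α] [IsOrderedRing α]
    {a b x y : α} (ha : 0 ≤ a) (hb : 0 ≤ b) (hx : 0 ≤ x) (hy : 0 ≤ y) :
    a * b ≤ (a + x) * (b + y) :=
  mul_le_mul (le_add_of_nonneg_right hx) (le_add_of_nonneg_right hy) hb (add_nonneg ha hx)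

/-- The thermal-operation constraint is preserved under the qubit composition law:
if `μ₁,ε₁,μ₂,ε₂ ∈ [0,1]` and `|cᵢ|² ≤ (1−εᵢμᵢ)(1−μᵢ)` for `i = 1,2`, then
`|c₁c₂|² ≤ (1−ε₃μ₃)(1−μ₃)`. -/
theorem stmt_17 (μ₁ ε₁ μ₂ ε₂ : ℝ) (c₁ c₂ : ℂ)
    (hμ₁ : μ₁ ∈ Set.Icc (0:ℝ) 1) (hε₁ : ε₁ ∈ Set.Icc (0:ℝ) 1)
    (hμ₂ : μ₂ ∈ Set.Icc (0:ℝ) 1) (hε₂ : ε₂ ∈ Set.Icc (0:ℝ) 1)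
    (hc₁ : ‖c₁‖ ^ 2 ≤ (1 - ε₁ * μ₁) * (1 - μ₁))
    (hc₂ : ‖c₂‖ ^ 2 ≤ (1 - ε₂ * μ₂) * (1 - μ₂)) :
    ‖c₁ * c₂‖ ^ 2 ≤
      (1 - (ε₁ * μ₁ + ε₂ * μ₂ - μ₁ * μ₂ * (1 + ε₁) * ε₂)) *
        (1 - (μ₁ + μ₂ - μ₁ * μ₂ * (1 + ε₁))) := by
  rw [one_sub_composed_epsMu, one_sub_composed_mu, norm_mul, mul_pow]
  have hεμ : 0 ≤ (1 - ε₁ * μ₁) * (1 - ε₂ * μ₂) :=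
    mul_nonneg (one_sub_mul_nonneg_of_mem_Icc hε₁ hμ₁) (one_sub_mul_nonneg_of_mem_Icc hε₂ hμ₂)
  have hμ : 0 ≤ (1 - μ₁) * (1 - μ₂) := mul_nonneg (sub_nonneg.2 hμ₁.2) (sub_nonneg.2 hμ₂.2)
  have hμμ : 0 ≤ μ₁ * μ₂ := mul_nonneg hμ₁.1 hμ₂.1
  calc ‖c₁‖ ^ 2 * ‖c₂‖ ^ 2 ≤ (1 - ε₁ * μ₁) * (1 - μ₁) * ((1 - ε₂ * μ₂) * (1 - μ₂)) :=
        mul_le_mul hc₁ hc₂ (sq_nonneg _) ((sq_nonneg _).trans hc₁)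
    _ = (1 - ε₁ * μ₁) * (1 - ε₂ * μ₂) * ((1 - μ₁) * (1 - μ₂)) := by ring
    _ ≤ _ := mul_le_add_mul_add hεμ hμ (mul_nonneg hμμ hε₂.1) (mul_nonneg hμμ hε₁.1)
end
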